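/- arXiv:1707.04054 — 2 statements merged into one kernel-verified Lean document; each statement's English description precedes it below -/
import Mathlib

section
/- Let E be a compact subset of an open set Ω ⊆ ℂ. Then the holomorphic hull Ê_Ω equals E together with the union of all bounded connected components of ℂ \ E that are contained in Ω. -/
/-!
Points of `E`, and points of bounded components of `ℂ \ E` lying in `Ω`, belong to the hull by
the maximum modulus principle, since the frontier of such a component lies in `E`.

Conversely, call `a ∉ E` an approximable pole if `w ↦ (w - a)⁻¹` is a uniform limit on `E` of
functions holomorphic on `Ω`. Poles outside `Ω` and poles near infinity are approximable, and
approximability is locally constant on `ℂ \ E` (pole pushing: with `g = (w - a)⁻¹` one has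
`(w - a')⁻¹ = g / (1 - (a' - a) g)`, and the geometric series for `(1 - (a' - a) g)⁻¹` converges
in the closed algebra of uniform limits). So if the component of `z` is unbounded or leaves `Ω`,
then `z` is an approximable pole; for `h ≈ (w - z)⁻¹` on `E`, the holomorphic function
`(w - z) h(w) - 1` is small on `E` but equals `-1` at `z`.
-/

open Set Metric Bornology Filter

def holHull (Ω E : Set ℂ) : Set ℂ :=
  {z ∈ Ω | ∀ h : ℂ → ℂ, DifferentiableOn ℂ h Ω →
    ‖h z‖ ≤ sSup ((fun w => ‖h w‖) '' E)}

theorem inverse_one_sub_mem_of_isClosed {R S : Type*} [NormedRing R] [HasSummableGeomSeries R]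
    [SetLike S R] [SubsemiringClass S R] {s : S} (hs : IsClosed (s : Set R)) {x : R}
    (hx : x ∈ s) (h : ‖x‖ < 1) : Ring.inverse (1 - x) ∈ s := by
  rw [← geom_series_eq_inverse x h]
  exact tsum_mem hs fun n => pow_mem hx n

theorem frontier_connectedComponentIn_subset_compl {α : Type*} [TopologicalSpace α]
    [LocallyConnectedSpace α] {F : Set α} (hF : IsOpen F) (x : α) :
    frontier (connectedComponentIn F x) ⊆ Fᶜ := by
  rw [hF.connectedComponentIn.frontier_eq]
  rintro w ⟨hw_cl, hwU⟩ hwF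
  obtain ⟨y, hyw, hyx⟩ := mem_closure_iff.mp hw_cl _ hF.connectedComponentIn
    (mem_connectedComponentIn hwF)
  rw [connectedComponentIn_eq hyx, ← connectedComponentIn_eq hyw] at hwU
  exact hwU (mem_connectedComponentIn hwF)

theorem IsCompact.norm_le_sSup_norm_image {X F : Type*} [TopologicalSpace X]
    [SeminormedAddGroup F] {E : Set X} (hE : IsCompact E) {h : X → F} (hh : ContinuousOn h E)
    {w : X} (hw : w ∈ E) : ‖h w‖ ≤ sSup ((fun w => ‖h w‖) '' E) :=
  le_csSup (hE.image_of_continuousOn hh.norm).bddAbove ⟨w, hw, rfl⟩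

def restrictHolomorphic (Ω K : Set ℂ) : Subalgebra ℂ C(K, ℂ) where
  carrier := {f | ∃ h : ℂ → ℂ, DifferentiableOn ℂ h Ω ∧ ∀ w : K, f w = h w}
  mul_mem' := by
    rintro f g ⟨hf, hf_diff, hf_eq⟩ ⟨hg, hg_diff, hg_eq⟩
    exact ⟨hf * hg, hf_diff.mul hg_diff, fun w => by simp [hf_eq, hg_eq]⟩
  add_mem' := by
    rintro f g ⟨hf, hf_diff, hf_eq⟩ ⟨hg, hg_diff, hg_eq⟩
    exact ⟨hf + hg, hf_diff.add hg_diff, fun w => by simp [hf_eq, hg_eq]⟩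
  algebraMap_mem' c := ⟨fun _ => c, differentiableOn_const c, fun _ => rfl⟩

def PoleApproximable (Ω K : Set ℂ) [CompactSpace K] (a : ℂ) : Prop :=
  ∃ g ∈ (restrictHolomorphic Ω K).topologicalClosure, ∀ w : K, g w = ((w : ℂ) - a)⁻¹

section

variable {Ω K : Set ℂ} [CompactSpace K] {a : ℂ}

theorem poleApproximable_of_notMem (haΩ : a ∉ Ω) (haK : a ∉ K) : PoleApproximable Ω K a := by
  have hcont : Continuous fun w : K => ((w : ℂ) - a)⁻¹ :=
    (continuous_subtype_val.sub continuous_const).inv₀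
      fun w => sub_ne_zero.mpr (ne_of_mem_of_not_mem w.2 haK)
  refine ⟨⟨_, hcont⟩, Subalgebra.le_topologicalClosure _ ⟨fun w => (w - a)⁻¹, ?_, fun _ => rfl⟩,
    fun _ => rfl⟩
  exact (differentiableOn_id.sub_const a).inv
    fun w hw => sub_ne_zero.mpr (ne_of_mem_of_not_mem hw haΩ)

theorem poleApproximable_of_div_one_sub {g x : C(K, ℂ)}
    (hg : g ∈ (restrictHolomorphic Ω K).topologicalClosure)
    (hx : x ∈ (restrictHolomorphic Ω K).topologicalClosure) (hx1 : ‖x‖ < 1)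
    (h : ∀ w : K, g w / (1 - x w) = ((w : ℂ) - a)⁻¹) : PoleApproximable Ω K a := by
  refine ⟨g * Ring.inverse (1 - x), mul_mem hg <| inverse_one_sub_mem_of_isClosed
    (Subalgebra.isClosed_topologicalClosure _) hx hx1, fun w => ?_⟩
  have hinv : Ring.inverse (1 - x) w * (1 - x w) = 1 := by
    simpa using congrArg (· w) (Ring.inverse_mul_cancel _ (isUnit_one_sub_of_norm_lt_one hx1))
  rw [ContinuousMap.mul_apply, eq_inv_of_mul_eq_one_left hinv, ← div_eq_mul_inv, h]

theorem eventually_poleApproximable_cobounded :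
    ∀ᶠ b in cobounded ℂ, PoleApproximable Ω K b := by
  obtain ⟨R, hR⟩ := (isCompact_iff_compactSpace.mpr ‹CompactSpace K›).isBounded.exists_norm_le
  filter_upwards [tendsto_norm_cobounded_atTop.eventually_gt_atTop (max R 0)] with b hb
  have hb0 : 0 < ‖b‖ := (le_max_right R 0).trans_lt hb
  have hb0' : b ≠ 0 := norm_pos_iff.mp hb0
  let x : C(K, ℂ) := ⟨fun w => b⁻¹ * w, by fun_prop⟩
  have hx : ‖x‖ < 1 := by
    refine ((x.norm_le (by positivity)).mpr fun w => ?_).trans_lt ((div_lt_one hb0).mpr hb)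
    rw [show x w = b⁻¹ * w from rfl, norm_mul, norm_inv, inv_mul_eq_div]
    gcongr
    exact (hR w w.2).trans (le_max_left R 0)
  refine poleApproximable_of_div_one_sub (g := ContinuousMap.const K (-b⁻¹)) (x := x)
    (Subalgebra.le_topologicalClosure _ ⟨fun _ => -b⁻¹, differentiableOn_const _, fun _ => rfl⟩)
    (Subalgebra.le_topologicalClosure _ ⟨fun w => b⁻¹ * w, by fun_prop, fun _ => rfl⟩) hx
    fun w => ?_
  change -b⁻¹ / (1 - b⁻¹ * w) = _
  rw [show 1 - b⁻¹ * w = b⁻¹ * (b - w) by field_simp, neg_div,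
    div_mul_cancel_left₀ (inv_ne_zero hb0'), ← inv_neg, neg_sub]

theorem PoleApproximable.of_norm_sub_lt {a' : ℂ} {r : ℝ} (ha : PoleApproximable Ω K a)
    (hr : ∀ w ∈ K, r ≤ ‖w - a‖) (haa' : ‖a' - a‖ < r) : PoleApproximable Ω K a' := by
  obtain ⟨g, hg, hga⟩ := ha
  have hr0 : 0 < r := (norm_nonneg _).trans_lt haa'
  have hwa : ∀ w : K, (w : ℂ) - a ≠ 0 := fun w =>
    norm_pos_iff.mp (hr0.trans_le (hr w w.2))
  have hx : ‖(a' - a) • g‖ < 1 := by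
    have hg_le : ‖g‖ ≤ r⁻¹ := (g.norm_le (by positivity)).mpr fun w => by
      rw [hga, norm_inv]
      exact inv_anti₀ hr0 (hr w w.2)
    calc ‖(a' - a) • g‖ ≤ ‖a' - a‖ * r⁻¹ := (norm_smul_le _ _).trans (by gcongr)
      _ < 1 := by rwa [mul_inv_lt_iff₀ hr0, one_mul]
  refine poleApproximable_of_div_one_sub hg (Subalgebra.smul_mem _ hg _) hx fun w => ?_
  rw [ContinuousMap.smul_apply, hga, smul_eq_mul,
    show 1 - (a' - a) * ((w : ℂ) - a)⁻¹ = ((w : ℂ) - a)⁻¹ * (w - a') by field_simp [hwa w]; ring,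
    div_mul_cancel_left₀ (inv_ne_zero (hwa w))]

theorem exists_ball_poleApproximable_iff (ha : a ∉ K) :
    ∃ r > 0, ∀ a' ∈ ball a r, a' ∉ K ∧ (PoleApproximable Ω K a ↔ PoleApproximable Ω K a') := by
  obtain ⟨r, hr0, hr⟩ := Metric.isOpen_iff.mp
    (isCompact_iff_compactSpace.mpr ‹CompactSpace K›).isClosed.isOpen_compl a ha
  have hrK : ∀ w ∈ K, r ≤ ‖w - a‖ := fun w hw => by
    simpa [← dist_eq_norm] using fun h => hr h hw
  refine ⟨r / 2, half_pos hr0, fun a' ha' => ?_⟩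
  rw [mem_ball, dist_eq_norm] at ha'
  have hr'K : ∀ w ∈ K, r / 2 ≤ ‖w - a'‖ := fun w hw => by
    have := norm_sub_le_norm_sub_add_norm_sub w a' a
    linarith [hrK w hw]
  refine ⟨fun ha'K => by simpa [hr0.not_ge] using (half_pos hr0).trans_le (hr'K a' ha'K), ?_, ?_⟩
  · exact fun h => h.of_norm_sub_lt hrK (by linarith)
  · exact fun h => h.of_norm_sub_lt hr'K (by rwa [norm_sub_rev])

theorem IsPreconnected.poleApproximable_of_mem {U : Set ℂ} (hU : IsPreconnected U)
    (hUK : Disjoint U K) {b z : ℂ} (hbU : b ∈ U) (hb : PoleApproximable Ω K b) (hzU : z ∈ U) :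
    PoleApproximable Ω K z := by
  have hopen : ∀ p : Prop → Prop, IsOpen {a | a ∉ K ∧ p (PoleApproximable Ω K a)} := by
    refine fun p => Metric.isOpen_iff.mpr fun a ⟨haK, hpa⟩ => ?_
    obtain ⟨r, hr0, hr⟩ := exists_ball_poleApproximable_iff (Ω := Ω) haK
    exact ⟨r, hr0, fun a' ha' => ⟨(hr a' ha').1, propext (hr a' ha').2 ▸ hpa⟩⟩
  have hsub := hU.subset_left_of_subset_union (hopen id) (hopen Not)
    (disjoint_left.mpr fun a ha ha' => ha'.2 ha.2)
    (fun a ha => (em _).imp (⟨hUK.notMem_of_mem_left ha, ·⟩) (⟨hUK.notMem_of_mem_left ha, ·⟩))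
    ⟨b, hbU, hUK.notMem_of_mem_left hbU, hb⟩
  exact (hsub hzU).2

theorem exists_mem_poleApproximable {U : Set ℂ} (hUK : Disjoint U K)
    (hU : ¬(IsBounded U ∧ U ⊆ Ω)) : ∃ b ∈ U, PoleApproximable Ω K b := by
  rcases not_and_or.mp hU with hUb | hUΩ
  · by_contra! h
    exact hUb (isBounded_def.mpr (mem_of_superset eventually_poleApproximable_cobounded
      fun b hb hbU => h b hbU hb))
  · obtain ⟨b, hbU, hbΩ⟩ := not_subset.mp hUΩ
    exact ⟨b, hbU, poleApproximable_of_notMem hbΩ (hUK.notMem_of_mem_left hbU)⟩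

theorem notMem_holHull_of_poleApproximable {E : Set ℂ} [CompactSpace E] {z : ℂ} (hz : z ∉ E)
    (hpz : PoleApproximable Ω E z) : z ∉ holHull Ω E := by
  obtain ⟨g, hg, hgz⟩ := hpz
  obtain ⟨R, hR0, hR⟩ :=
    (isCompact_iff_compactSpace.mpr ‹CompactSpace E›).isBounded.exists_pos_norm_le
  rw [← SetLike.mem_coe, Subalgebra.topologicalClosure_coe] at hg
  obtain ⟨s, ⟨H, hH, hsH⟩, hgs⟩ := Metric.mem_closure_iff.mp hg (2 * (R + ‖z‖))⁻¹ (by positivity)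
  rintro ⟨-, hzhull⟩
  have key := hzhull (fun w => (w - z) * H w - 1)
    (((differentiableOn_id.sub_const z).mul hH).sub_const 1)
  rw [sub_self, zero_mul, zero_sub, norm_neg, norm_one] at key
  have : sSup ((fun w => ‖(w - z) * H w - 1‖) '' E) ≤ 2⁻¹ := by
    refine Real.sSup_le ?_ (by norm_num)
    rintro _ ⟨w, hw, rfl⟩
    have hwz : w - z ≠ 0 := sub_ne_zero.mpr (ne_of_mem_of_not_mem hw hz)
    have hHw : (w - z) * H w - 1 = (w - z) * (s ⟨w, hw⟩ - g ⟨w, hw⟩) := by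
      rw [hsH, hgz, mul_sub, mul_inv_cancel₀ hwz]
    calc ‖(w - z) * H w - 1‖ ≤ (R + ‖z‖) * (2 * (R + ‖z‖))⁻¹ := by
          rw [hHw, norm_mul, ← dist_eq_norm (s ⟨w, hw⟩), dist_comm]
          gcongr
          · exact (norm_sub_le w z).trans (add_le_add_left (hR w hw) _)
          · exact (ContinuousMap.dist_apply_le_dist _).trans hgs.le
      _ = 2⁻¹ := by field_simp
  linarith

theorem subset_holHull {E : Set ℂ} (hE : IsCompact E) (hEΩ : E ⊆ Ω) : E ⊆ holHull Ω E :=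
  fun _ hw => ⟨hEΩ hw, fun _ hh => hE.norm_le_sSup_norm_image (hh.continuousOn.mono hEΩ) hw⟩

theorem mem_holHull_of_isBounded_connectedComponentIn {E : Set ℂ} (hE : IsCompact E)
    (hEΩ : E ⊆ Ω) {z : ℂ} (hz : z ∉ E) (hb : IsBounded (connectedComponentIn Eᶜ z))
    (hΩ : connectedComponentIn Eᶜ z ⊆ Ω) : z ∈ holHull Ω E := by
  have hzU := mem_connectedComponentIn (F := Eᶜ) hz
  have hfr : frontier (connectedComponentIn Eᶜ z) ⊆ E := by
    simpa using frontier_connectedComponentIn_subset_compl hE.isClosed.isOpen_compl z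
  refine ⟨hΩ hzU, fun h hh => Complex.norm_le_of_forall_mem_frontier_norm_le hb
    (hh.mono ?_).diffContOnCl (fun w hw => hE.norm_le_sSup_norm_image (hh.continuousOn.mono hEΩ)
      (hfr hw)) (subset_closure hzU)⟩
  rw [closure_eq_self_union_frontier]
  exact union_subset hΩ (hfr.trans hEΩ)

end

theorem stmt9_general (Ω : Set ℂ) (E : Set ℂ) (hE : IsCompact E) (hEΩ : E ⊆ Ω) :
    holHull Ω E =
      E ∪ {z | z ∉ E ∧ Bornology.IsBounded (connectedComponentIn Eᶜ z) ∧
        connectedComponentIn Eᶜ z ⊆ Ω} := by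
  have := isCompact_iff_compactSpace.mp hE
  ext z
  refine ⟨fun hz => ?_, ?_⟩
  · refine or_iff_not_imp_left.mpr fun hzE => ⟨hzE, not_not.mp fun hU => ?_⟩
    have hUE : Disjoint (connectedComponentIn Eᶜ z) E :=
      disjoint_compl_left.mono_left (connectedComponentIn_subset _ _)
    obtain ⟨b, hbU, hb⟩ := exists_mem_poleApproximable hUE hU
    exact notMem_holHull_of_poleApproximable hzE (isPreconnected_connectedComponentIn
      |>.poleApproximable_of_mem hUE hbU hb (mem_connectedComponentIn hzE)) hz
  · rintro (hzE | ⟨hzE, hb, hΩ⟩)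
    · exact subset_holHull hE hEΩ hzE
    · exact mem_holHull_of_isBounded_connectedComponentIn hE hEΩ hzE hb hΩ

/-- The holomorphic hull of a compact `E ⊆ Ω` equals `E` together with all bounded
connected components of `ℂ \ E` contained in `Ω`. -/
theorem stmt9 (Ω : Set ℂ) (hΩ : IsOpen Ω) (E : Set ℂ) (hE : IsCompact E) (hEΩ : E ⊆ Ω) :
    holHull Ω E =
      E ∪ {z | z ∉ E ∧ Bornology.IsBounded (connectedComponentIn Eᶜ z) ∧
        connectedComponentIn Eᶜ z ⊆ Ω} :=
  stmt9_general Ω E hE hEΩ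
end

section
/- The Sierpinski triangle S ⊆ ℂ is not a countable union of compact sets each of which is holomorphically convex in some fixed open set Ω ⊇ S. -/
/-!
By the Baire category theorem one of the compact sets `F n` contains a relative neighbourhood
`S ∩ B(x, ε)` of a point `x ∈ S`. Self-similarity places a small copy of `S`, and with it a small
copy `U` of the middle hole, inside this neighbourhood. The boundary of `U` lies in `F n`, so by
the maximum modulus principle `U` lies in the holomorphic hull of `F n`, which is `F n ⊆ S`.
But `U` is open and nonempty, while `S` is Lebesgue-null, being covered by three copies of
itself scaled by `1/2`.
-/

open Set Metric Bornology MeasureTheory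

theorem subset_holHull_of_frontier_subset {Ω K U : Set ℂ} (hK : IsCompact K) (hKΩ : K ⊆ Ω)
    (hU : IsBounded U) (hUΩ : closure U ⊆ Ω) (hUK : frontier U ⊆ K) : U ⊆ holHull Ω K := by
  intro z hz
  refine ⟨hUΩ (subset_closure hz), fun h hh => ?_⟩
  have hbdd : BddAbove ((fun w => ‖h w‖) '' K) :=
    (hK.image_of_continuousOn (hh.continuousOn.mono hKΩ).norm).bddAbove
  exact Complex.norm_le_of_forall_mem_frontier_norm_le hU (hh.mono hUΩ).diffContOnCl
    (fun w hw => le_csSup hbdd (mem_image_of_mem _ (hUK hw))) (subset_closure hz)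

theorem exists_inter_ball_subset_of_subset_iUnion {X : Type*} [PseudoMetricSpace X] {S : Set X}
    (hS : IsComplete S) (hne : S.Nonempty) {F : ℕ → Set X} (hF : ∀ n, IsClosed (F n))
    (hSF : S ⊆ ⋃ n, F n) : ∃ n, ∃ x ∈ S, ∃ ε > 0, S ∩ ball x ε ⊆ F n := by
  have := hS.completeSpace_coe
  have := hne.to_subtype
  obtain ⟨n, ⟨x, hx⟩⟩ := nonempty_interior_of_iUnion_of_closed
    (fun n => (hF n).preimage continuous_subtype_val) (f := fun n => ((↑) : S → X) ⁻¹' F n)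
    (eq_univ_of_forall fun y => mem_iUnion.2 (mem_iUnion.1 (hSF y.2) :))
  obtain ⟨ε, hε, hball⟩ := isOpen_iff.mp isOpen_interior x hx
  exact ⟨n, x, x.2, ε, hε, fun y ⟨hyS, hy⟩ => interior_subset (s := ((↑) : S → X) ⁻¹' F n)
    (hball (show (⟨y, hyS⟩ : S) ∈ ball x ε from hy))⟩

theorem exists_div_two_pow_lt (R : ℝ) {ε : ℝ} (hε : 0 < ε) : ∃ n : ℕ, R / 2 ^ n < ε := by
  obtain ⟨n, hn⟩ := pow_unbounded_of_one_lt (R / ε) one_lt_two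
  exact ⟨n, (div_lt_iff₀ (by positivity)).2 (by rwa [div_lt_iff₀ hε, mul_comm] at hn)⟩

theorem volume_eq_zero_of_subset_iUnion_half {ι : Type*} [Fintype ι] (hι : Fintype.card ι < 4)
    (v : ι → ℂ) {S : Set ℂ} (hS : volume S ≠ ⊤)
    (hsub : S ⊆ ⋃ i, (fun z => (z + v i) / 2) '' S) : volume S = 0 := by
  have himage : ∀ i, volume ((fun z => (z + v i) / 2) '' S) = 4⁻¹ * volume S := by
    intro i
    have : (fun z => (z + v i) / 2) = AffineMap.homothety (v i) (1 / 2 : ℝ) := by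
      funext z
      simp only [AffineMap.homothety_apply, vsub_eq_sub, vadd_eq_add, Complex.real_smul]
      push_cast
      ring
    rw [this, Measure.addHaar_image_homothety, Complex.finrank_real_complex,
      show |(1 / 2 : ℝ) ^ 2| = 4⁻¹ by norm_num, ENNReal.ofReal_inv_of_pos (by norm_num)]
    simp
  have hle : volume S ≤ (Fintype.card ι / 4) * volume S := calc
    volume S ≤ ∑ i, volume ((fun z => (z + v i) / 2) '' S) :=
      (measure_mono hsub).trans (measure_iUnion_fintype_le _ _)
    _ = (Fintype.card ι / 4) * volume S := by
      rw [Finset.sum_congr rfl fun i _ => himage i]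
      simp [div_eq_mul_inv, mul_assoc]
  have hquarter : (Fintype.card ι : ENNReal) / 4 < 1 :=
    ENNReal.div_lt_of_lt_mul (by rw [one_mul]; exact_mod_cast hι)
  by_contra h0
  have hlt := ENNReal.mul_lt_mul_right h0 hS hquarter
  rw [mul_one, mul_comm] at hlt
  exact hlt.not_ge hle

theorem segment_subset_of_halving {S : Set ℂ} (hS : IsClosed S) (hne : S.Nonempty) {p q : ℂ}
    (hp : ∀ z ∈ S, (z + p) / 2 ∈ S) (hq : ∀ z ∈ S, (z + q) / 2 ∈ S) : segment ℝ p q ⊆ S := by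
  obtain ⟨s, hs⟩ := hne
  set R := ‖s - p‖ + ‖q - p‖
  -- each point of the segment is a half-image of another one, so its distance to `S` halves
  have approx : ∀ n : ℕ, ∀ t ∈ Icc (0 : ℝ) 1, ∃ w ∈ S, dist w (p + t * (q - p)) ≤ R / 2 ^ n := by
    intro n
    induction n with
    | zero =>
      rintro t ⟨ht0, ht1⟩
      refine ⟨s, hs, ?_⟩
      calc dist s (p + t * (q - p)) = ‖(s - p) - t * (q - p)‖ := by rw [dist_eq_norm]; ring_nf
        _ ≤ ‖s - p‖ + t * ‖q - p‖ := by
          grw [norm_sub_le, norm_mul, Complex.norm_real, Real.norm_of_nonneg ht0]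
        _ ≤ R / 2 ^ 0 := by
          simp only [R, pow_zero, div_one]
          gcongr
          nlinarith [norm_nonneg (q - p)]
    | succ n ih =>
      rintro t ⟨ht0, ht1⟩
      obtain ⟨t', ht', v, hv, hpt⟩ : ∃ t' ∈ Icc (0 : ℝ) 1, ∃ v, (∀ z ∈ S, (z + v) / 2 ∈ S) ∧
          p + t * (q - p) = (p + t' * (q - p) + v) / 2 := by
        rcases le_total t (1 / 2) with ht | ht
        · exact ⟨2 * t, ⟨by linarith, by linarith⟩, p, hp, by push_cast; ring⟩
        · exact ⟨2 * t - 1, ⟨by linarith, by linarith⟩, q, hq, by push_cast; ring⟩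
      obtain ⟨w, hwS, hw⟩ := ih t' ht'
      refine ⟨(w + v) / 2, hv w hwS, ?_⟩
      calc dist ((w + v) / 2) (p + t * (q - p)) = dist w (p + t' * (q - p)) / 2 := by
            rw [hpt, dist_eq_norm, dist_eq_norm, ← sub_div, norm_div, Complex.norm_two]; ring_nf
        _ ≤ R / 2 ^ (n + 1) := by rw [pow_succ, ← div_div]; gcongr
  rw [segment_eq_image']
  rintro _ ⟨t, ht, rfl⟩
  dsimp only
  refine hS.closure_subset_iff.2 subset_rfl (Metric.mem_closure_iff.2 fun ε hε => ?_)
  obtain ⟨n, hn⟩ := exists_div_two_pow_lt R hε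
  obtain ⟨w, hwS, hw⟩ := approx n t ht
  refine ⟨w, hwS, ?_⟩
  rw [dist_comm, Complex.real_smul]
  exact hw.trans_lt hn

theorem exists_scaled_copy_mem {ι : Type*} {v : ι → ℂ} {S : Set ℂ}
    (hself : S = ⋃ i, (fun z => (z + v i) / 2) '' S) (k : ℕ) {x : ℂ} (hx : x ∈ S) :
    ∃ c, (∀ z ∈ S, c + z / 2 ^ k ∈ S) ∧ ∃ y ∈ S, x = c + y / 2 ^ k := by
  induction k generalizing x with
  | zero => exact ⟨0, fun z hz => by simpa using hz, x, hx, by simp⟩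
  | succ k ih =>
    rw [hself] at hx
    obtain ⟨i, x', hx', rfl⟩ := mem_iUnion.1 hx
    obtain ⟨c, hc, y, hy, rfl⟩ := ih hx'
    refine ⟨(c + v i) / 2, fun z hz => ?_, y, hy, by ring⟩
    have : (c + z / 2 ^ k + v i) / 2 ∈ S := hself ▸ mem_iUnion.2 ⟨i, _, hc z hz, rfl⟩
    convert this using 1
    ring

/-- Real coordinates of `z` in the basis `1, ω` of `ℂ` over `ℝ`; junk unless `ω.im ≠ 0`. -/
noncomputable def basisCoords (ω z : ℂ) : ℝ × ℝ :=
  (z.re - z.im / ω.im * ω.re, z.im / ω.im)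

section basisCoords

variable {ω : ℂ}

@[fun_prop]
theorem continuous_basisCoords : Continuous (basisCoords ω) := by
  unfold basisCoords
  fun_prop

theorem basisCoords_ofReal_add_ofReal_mul (hω : ω.im ≠ 0) (s t : ℝ) :
    basisCoords ω (s + t * ω) = (s, t) := by
  simp [basisCoords, hω]

theorem ofReal_basisCoords_add (hω : ω.im ≠ 0) (z : ℂ) :
    ((basisCoords ω z).1 : ℂ) + (basisCoords ω z).2 * ω = z := by
  apply Complex.ext <;> simp [basisCoords, hω]

end basisCoords

/-- The open triangle with vertices `1/2`, `ω/2`, `(1 + ω)/2`: the first hole cut out of the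
Sierpinski triangle with vertices `0`, `1`, `ω`. -/
def middleTriangle (ω : ℂ) : Set ℂ :=
  basisCoords ω ⁻¹' {p | p.1 < 1 / 2 ∧ p.2 < 1 / 2 ∧ 1 / 2 < p.1 + p.2}

section middleTriangle

variable {ω : ℂ}

theorem isOpen_middleTriangle : IsOpen (middleTriangle ω) :=
  IsOpen.preimage continuous_basisCoords <| (isOpen_lt continuous_fst continuous_const).inter <|
    (isOpen_lt continuous_snd continuous_const).inter
      (isOpen_lt continuous_const (continuous_fst.add continuous_snd))

theorem middleTriangle_nonempty (hω : ω.im ≠ 0) : (middleTriangle ω).Nonempty :=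
  ⟨(1 / 3 : ℝ) + (1 / 3 : ℝ) * ω, by
    simp only [middleTriangle, mem_preimage, basisCoords_ofReal_add_ofReal_mul hω]
    norm_num⟩

theorem isBounded_middleTriangle (hω : ω.im ≠ 0) : IsBounded (middleTriangle ω) := by
  have hK : IsCompact ((fun p : ℝ × ℝ => (p.1 : ℂ) + p.2 * ω) '' Icc 0 1 ×ˢ Icc 0 1) :=
    (isCompact_Icc.prod isCompact_Icc).image (by fun_prop)
  refine hK.isBounded.subset ?_
  rintro z ⟨h₁, h₂, h₃⟩
  exact ⟨basisCoords ω z, ⟨⟨by linarith, by linarith⟩, ⟨by linarith, by linarith⟩⟩,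
    ofReal_basisCoords_add hω z⟩

end middleTriangle

theorem frontier_middleTriangle_subset {ω : ℂ} (hω : ω.im ≠ 0) {S : Set ℂ} (hS : IsClosed S)
    (hne : S.Nonempty) (hv : ∀ i, ∀ z ∈ S, (z + ![0, 1, ω] i) / 2 ∈ S) :
    frontier (middleTriangle ω) ⊆ S := by
  have hcl : closure (middleTriangle ω) ⊆
      basisCoords ω ⁻¹' {p | p.1 ≤ 1 / 2 ∧ p.2 ≤ 1 / 2 ∧ 1 / 2 ≤ p.1 + p.2} :=
    closure_minimal (fun _ ⟨h₁, h₂, h₃⟩ => ⟨h₁.le, h₂.le, h₃.le⟩) <|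
      IsClosed.preimage continuous_basisCoords <|
        (isClosed_le continuous_fst continuous_const).inter <|
          (isClosed_le continuous_snd continuous_const).inter
            (isClosed_le continuous_const (continuous_fst.add continuous_snd))
  have edge {p q m : ℂ} (hp : ∀ z ∈ S, (z + p) / 2 ∈ S) (hq : ∀ z ∈ S, (z + q) / 2 ∈ S)
      (hm : ∀ z ∈ S, (z + m) / 2 ∈ S) : ∀ w ∈ segment ℝ p q, (w + m) / 2 ∈ S :=
    fun w hw => hm w (segment_subset_of_halving hS hne hp hq hw)
  rw [isOpen_middleTriangle.frontier_eq]
  rintro z ⟨hzcl, hz⟩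
  obtain ⟨hs, ht, hst⟩ := hcl hzcl
  rw [← ofReal_basisCoords_add hω z]
  set s := (basisCoords ω z).1
  set t := (basisCoords ω z).2
  rcases hs.eq_or_lt with hs | hs
  · convert edge (hv 0) (hv 2) (hv 1) _ ⟨1 - 2 * t, 2 * t, by linarith, by linarith, by ring, rfl⟩
      using 1
    simp only [Complex.real_smul, hs]
    push_cast
    ring
  rcases ht.eq_or_lt with ht | ht
  · convert edge (hv 0) (hv 1) (hv 2) _ ⟨1 - 2 * s, 2 * s, by linarith, by linarith, by ring, rfl⟩
      using 1
    simp only [Complex.real_smul, ht]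
    push_cast
    ring
  rcases hst.eq_or_lt with hst | hst
  · convert edge (hv 1) (hv 2) (hv 0) _ ⟨2 * s, 2 * t, by linarith, by linarith, by linarith, rfl⟩
      using 1
    simp only [Complex.real_smul]
    push_cast
    ring
  exact absurd ⟨hs, ht, hst⟩ hz

theorem exists_isOpen_closure_subset_ball_frontier_subset {ω : ℂ} (hω : ω.im ≠ 0) {S : Set ℂ}
    (hS : IsClosed S) (hbdd : IsBounded S)
    (hself : S = ⋃ i : Fin 3, (fun z => (z + ![0, 1, ω] i) / 2) '' S) {x : ℂ} (hx : x ∈ S)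
    {r : ℝ} (hr : 0 < r) :
    ∃ U, IsOpen U ∧ U.Nonempty ∧ closure U ⊆ ball x r ∧ frontier U ⊆ S := by
  have hv (i) : ∀ z ∈ S, (z + ![0, 1, ω] i) / 2 ∈ S :=
    fun z hz => hself ▸ mem_iUnion.2 ⟨i, z, hz, rfl⟩
  have hE := frontier_middleTriangle_subset hω hS ⟨x, hx⟩ hv
  obtain ⟨R, hR⟩ := (hbdd.union (isBounded_middleTriangle hω).closure).subset_closedBall 0
  obtain ⟨k, hk⟩ := exists_div_two_pow_lt (2 * R) hr
  obtain ⟨c, hc, y, hy, rfl⟩ := exists_scaled_copy_mem hself k hx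
  set g : ℂ → ℂ := fun z => 2 ^ k * (z - c)
  have hg : Continuous g := by fun_prop
  have hg_inv (z : ℂ) : c + g z / 2 ^ k = z := by field_simp [g]; ring
  refine ⟨g ⁻¹' middleTriangle ω, isOpen_middleTriangle.preimage hg, ?_, ?_, ?_⟩
  · obtain ⟨e, he⟩ := middleTriangle_nonempty hω
    exact ⟨c + e / 2 ^ k, by simpa [g, mul_div_cancel₀] using he⟩
  · intro z hz
    have hgz := hR (mem_union_right _ (hg.closure_preimage_subset _ hz))
    have hyR := hR (mem_union_left _ hy)
    rw [mem_closedBall, dist_zero_right] at hgz hyR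
    rw [mem_ball, ← hg_inv z, dist_eq_norm, add_sub_add_left_eq_sub, ← sub_div, norm_div,
      norm_pow, Complex.norm_two]
    calc ‖g z - y‖ / 2 ^ k ≤ 2 * R / 2 ^ k := by gcongr; linarith [norm_sub_le (g z) y]
      _ < r := hk
  · intro z hz
    rw [← hg_inv z]
    exact hc _ (hE (hg.frontier_preimage_subset _ hz))

open Set Metric Complex in
/-- The Sierpinski triangle (the attractor of the IFS of three half-scalings towards
the vertices of an equilateral triangle) is not a countable union of compact sets each
holomorphically convex in a fixed open set `Ω ⊇ S`. -/
theorem stmt15 (S : Set ℂ) (hS : IsCompact S) (hne : S.Nonempty)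
    (hself : S = ⋃ i : Fin 3,
      (fun z => (z + ![0, 1, Complex.exp (Real.pi / 3 * Complex.I)] i) / 2) '' S)
    (Ω : Set ℂ) (hΩ : IsOpen Ω) (hSΩ : S ⊆ Ω) :
    ¬ ∃ F : ℕ → Set ℂ,
        (∀ n, IsCompact (F n) ∧ F n ⊆ Ω ∧ holHull Ω (F n) = F n) ∧ S = ⋃ n, F n := by
  rintro ⟨F, hF, hSF⟩
  have hω : (Complex.exp (Real.pi / 3 * Complex.I)).im ≠ 0 := by
    rw [← ofReal_ofNat, ← ofReal_div, exp_ofReal_mul_I_im]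
    exact (Real.sin_pos_of_pos_of_lt_pi (by positivity) (by linarith [Real.pi_pos])).ne'
  obtain ⟨n, x, hx, ε, hε, hxF⟩ := exists_inter_ball_subset_of_subset_iUnion hS.isComplete hne
    (fun n => (hF n).1.isClosed) hSF.subset
  obtain ⟨δ, hδ, hδΩ⟩ := isOpen_iff.mp hΩ x (hSΩ hx)
  obtain ⟨U, hUo, hUne, hUcl, hUfr⟩ := exists_isOpen_closure_subset_ball_frontier_subset hω
    hS.isClosed hS.isBounded hself hx (lt_min hε hδ)
  have hUF : U ⊆ F n := (hF n).2.2 ▸ subset_holHull_of_frontier_subset (hF n).1 (hF n).2.1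
    (isBounded_ball.subset (subset_closure.trans hUcl))
    (hUcl.trans ((ball_subset_ball (min_le_right _ _)).trans hδΩ))
    fun z hz => hxF ⟨hUfr hz, ball_subset_ball (min_le_left _ _)
      (hUcl (frontier_subset_closure hz))⟩
  have hnull : volume S = 0 :=
    volume_eq_zero_of_subset_iUnion_half (by simp) _ hS.measure_lt_top.ne hself.subset
  exact hUo.measure_ne_zero volume hUne
    (measure_mono_null (hUF.trans (hSF ▸ subset_iUnion F n)) hnull)
end
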